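/- For every element g̃ of GA(Ṽ) (with dim Ṽ ≥ 2 if |F| = 2), the reflection length of g̃ is at most dim mov(g̃) + 2. -/

import Mathlib

open Module Pointwise

/-- The moved space of an affine transformation. -/
def mov {F V P : Type*} [Field F] [AddCommGroup V] [Module F V] [AddTorsor V P]
    (g : P ≃ᵃ[F] P) : Set V :=
  Set.range fun x => g x -ᵥ x

/-- A reflection in the general affine group: an invertible affine transformation
whose fixed-point set is an affine hyperplane. -/
def IsAffRefl {F V P : Type*} [Field F] [AddCommGroup V] [Module F V] [AddTorsor V P]
    (r : P ≃ᵃ[F] P) : Prop :=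
  ∃ H : AffineSubspace F P, (H : Set P) = {x | r x = x} ∧
    Module.finrank F (V ⧸ H.direction) = 1

/-- Reflection length in the general affine group (`⊤` if no factorization exists). -/
noncomputable def reflLenA {F V P : Type*} [Field F] [AddCommGroup V] [Module F V]
    [AddTorsor V P] (g : P ≃ᵃ[F] P) : ℕ∞ :=
  sInf {n : ℕ∞ | ∃ l : List (P ≃ᵃ[F] P),
    (∀ r ∈ l, IsAffRefl r) ∧ l.prod = g ∧ (l.length : ℕ∞) = n}

/-- The dimension of the moved space (an affine subspace of `V`). -/
noncomputable def movDim {F V P : Type*} [Field F] [AddCommGroup V] [Module F V]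
    [AddTorsor V P] (g : P ≃ᵃ[F] P) : ℕ :=
  Module.finrank F (vectorSpan F (mov g))

section Aux
variable {F V P : Type*} [Field F] [AddCommGroup V] [Module F V] [AddTorsor V P]

/-- The "displacement" linear map of an affine equivalence. -/
noncomputable def Bmap (g : P ≃ᵃ[F] P) : V →ₗ[F] V :=
  (g.linear : V →ₗ[F] V) - LinearMap.id

theorem Bmap_apply (g : P ≃ᵃ[F] P) (v : V) : Bmap g v = g.linear v - v := rfl

theorem vsub_apply_eq (g : P ≃ᵃ[F] P) (x y : P) : g x -ᵥ g y = g.linear (x -ᵥ y) :=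
  ((g : P →ᵃ[F] P).linearMap_vsub x y).symm

theorem vectorSpan_mov (g : P ≃ᵃ[F] P) :
    vectorSpan F (mov g) = LinearMap.range (Bmap g) := by
  apply le_antisymm
  · rw [vectorSpan, Submodule.span_le]
    rintro v ⟨a, ⟨x, rfl⟩, b, ⟨y, rfl⟩, rfl⟩
    refine ⟨x -ᵥ y, ?_⟩
    show Bmap g (x -ᵥ y) = (g x -ᵥ x) -ᵥ (g y -ᵥ y)
    rw [Bmap_apply, ← vsub_apply_eq, vsub_eq_sub (g x -ᵥ x), vsub_sub_vsub_comm]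
  · rintro v ⟨u, rfl⟩
    have p : P := Classical.arbitrary P
    have h1 : (g (u +ᵥ p) -ᵥ (u +ᵥ p)) ∈ mov g := ⟨u +ᵥ p, rfl⟩
    have h2 : (g p -ᵥ p) ∈ mov g := ⟨p, rfl⟩
    have key : Bmap g u = (g (u +ᵥ p) -ᵥ (u +ᵥ p)) - (g p -ᵥ p) := by
      rw [Bmap_apply]
      simp only [AffineEquiv.map_vadd, vadd_vsub_assoc, vsub_vadd_eq_vsub_sub]
      abel
    rw [key, ← vsub_eq_sub]
    exact vsub_mem_vectorSpan F h1 h2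

theorem movDim_eq (g : P ≃ᵃ[F] P) : movDim g = finrank F (LinearMap.range (Bmap g)) := by
  rw [movDim, vectorSpan_mov]

theorem vsub_fixed (g : P ≃ᵃ[F] P) {p : P} (hp : g p = p) (x : P) :
    g x -ᵥ x = Bmap g (x -ᵥ p) := by
  rw [Bmap_apply, ← vsub_apply_eq, hp, vsub_sub_vsub_cancel_right]

theorem fixed_iff (g : P ≃ᵃ[F] P) {p : P} (hp : g p = p) (x : P) :
    g x = x ↔ (x -ᵥ p) ∈ LinearMap.ker (Bmap g) := by
  rw [LinearMap.mem_ker, ← vsub_fixed g hp, vsub_eq_zero_iff_eq]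

theorem exists_dual_eq_one' {v : V} (hv : v ≠ 0) : ∃ φ : V →ₗ[F] F, φ v = 1 := by
  have := (not_iff_not.mpr (Module.forall_dual_apply_eq_zero_iff F v)).mpr hv
  push_neg at this
  obtain ⟨φ, hφ⟩ := this
  exact ⟨(φ v)⁻¹ • φ, by simp [inv_mul_cancel₀ hφ]⟩

theorem exists_dual_two {a b : V} (ha : a ≠ 0) (hb : b ≠ 0) :
    ∃ ψ : V →ₗ[F] F, ψ a ≠ 0 ∧ ψ b ≠ 0 := by
  obtain ⟨ψ1, h1⟩ := exists_dual_eq_one' (F := F) ha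
  obtain ⟨ψ2, h2⟩ := exists_dual_eq_one' (F := F) hb
  by_cases hb1 : ψ1 b ≠ 0
  · exact ⟨ψ1, by rw [h1]; exact one_ne_zero, hb1⟩
  by_cases ha2 : ψ2 a ≠ 0
  · exact ⟨ψ2, ha2, by rw [h2]; exact one_ne_zero⟩
  push_neg at hb1 ha2
  refine ⟨ψ1 + ψ2, ?_, ?_⟩
  · rw [LinearMap.add_apply, h1, ha2, add_zero]; exact one_ne_zero
  · rw [LinearMap.add_apply, h2, hb1, zero_add]; exact one_ne_zero

theorem exists_functional {K : Submodule F V} {x y : V} (hx : x ∉ K) (hy : y ∉ K) :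
    ∃ φ : V →ₗ[F] F, (∀ v ∈ K, φ v = 0) ∧ φ x ≠ 0 ∧ φ y ≠ 0 := by
  have hxq : K.mkQ x ≠ 0 := by
    rw [Submodule.mkQ_apply, Ne, Submodule.Quotient.mk_eq_zero]; exact hx
  have hyq : K.mkQ y ≠ 0 := by
    rw [Submodule.mkQ_apply, Ne, Submodule.Quotient.mk_eq_zero]; exact hy
  obtain ⟨ψ, hψx, hψy⟩ := exists_dual_two (F := F) hxq hyq
  refine ⟨ψ.comp K.mkQ, ?_, hψx, hψy⟩
  intro v hv
  have hv0 : K.mkQ v = 0 := by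
    rwa [Submodule.mkQ_apply, Submodule.Quotient.mk_eq_zero]
  simp [LinearMap.comp_apply, hv0]

/-- The affine functional `x ↦ φ (x -ᵥ p)`. -/
def afun (φ : V →ₗ[F] F) (p : P) : P →ᵃ[F] F where
  toFun := fun x => φ (x -ᵥ p)
  linear := φ
  map_vadd' := by
    intro q v
    simp [vadd_vsub_assoc, map_add, vadd_eq_add]

theorem afun_apply (φ : V →ₗ[F] F) (p : P) (x : P) : afun φ p x = φ (x -ᵥ p) := rfl

theorem afun_linear (φ : V →ₗ[F] F) (p : P) : (afun φ p).linear = φ := rfl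

theorem vadd_eq_self_iff {v : V} {x : P} : v +ᵥ x = x ↔ v = 0 := by
  constructor
  · intro h
    have h2 : v +ᵥ x = (0 : V) +ᵥ x := by rw [h, zero_vadd]
    exact vadd_right_cancel x h2
  · rintro rfl; exact zero_vadd _ _

theorem finrank_quot_ker {φ : V →ₗ[F] F} (hφ : φ ≠ 0) :
    Module.finrank F (V ⧸ LinearMap.ker φ) = 1 := by
  have hsurj : Function.Surjective φ := by
    obtain ⟨v, hv⟩ := DFunLike.ne_iff.mp hφ
    intro c
    have : φ v ≠ 0 := by simpa using hv
    exact ⟨(c / φ v) • v, by rw [map_smul, smul_eq_mul, div_mul_cancel₀ _ this]⟩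
  rw [(φ.quotKerEquivRange).finrank_eq, LinearMap.range_eq_top.mpr hsurj, finrank_top, finrank_self]

/-- linear part of a shear -/
def shearLin (φ : V →ₗ[F] F) (w : V) (h : φ w ≠ -1) : V ≃ₗ[F] V :=
  have h1 : (1 : F) + φ w ≠ 0 := fun hc => h (by linear_combination hc)
  LinearEquiv.ofLinear (LinearMap.id + φ.smulRight w)
    (LinearMap.id + ((-(1 + φ w)⁻¹) • φ).smulRight w)
    (by
      ext v
      simp only [LinearMap.coe_comp, Function.comp_apply, LinearMap.add_apply,
        LinearMap.id_apply, LinearMap.coe_smulRight, LinearMap.smul_apply, map_add, map_smul,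
        smul_eq_mul, LinearMap.id_coe, id_eq]
      match_scalars
      · ring
      · field_simp; ring)
    (by
      ext v
      simp only [LinearMap.coe_comp, Function.comp_apply, LinearMap.add_apply,
        LinearMap.id_apply, LinearMap.coe_smulRight, LinearMap.smul_apply, map_add, map_smul,
        smul_eq_mul, LinearMap.id_coe, id_eq]
      match_scalars
      · ring
      · field_simp; ring)

theorem shearLin_apply (φ : V →ₗ[F] F) (w : V) (h : φ w ≠ -1) (v : V) :
    shearLin φ w h v = φ v • w + v := by
  simp [shearLin]; abel

/-- A shear: affine transformation x ↦ f x • w +ᵥ x. -/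
noncomputable def shear (f : P →ᵃ[F] F) (w : V) (h : f.linear w ≠ -1) : P ≃ᵃ[F] P :=
  AffineEquiv.mk' (fun x => f x • w +ᵥ x) (shearLin f.linear w h) (Classical.arbitrary P)
    (by
      intro x
      beta_reduce
      rw [shearLin_apply, vadd_vadd]
      conv_lhs => rw [← vsub_vadd x (Classical.arbitrary P)]
      rw [vadd_vadd, AffineMap.map_vadd]
      congr 1
      rw [vadd_eq_add, add_smul]
      abel)

theorem shear_apply (f : P →ᵃ[F] F) (w : V) (h : f.linear w ≠ -1) (x : P) :
    shear f w h x = f x • w +ᵥ x := rfl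

theorem shear_linear (f : P →ᵃ[F] F) (w : V) (h : f.linear w ≠ -1) :
    (shear f w h).linear = shearLin f.linear w h := rfl

theorem isAffRefl_shear (f : P →ᵃ[F] F) (w : V) (h : f.linear w ≠ -1)
    (hw : w ≠ 0) (hf : f.linear ≠ 0) : IsAffRefl (shear f w h) := by
  -- find a point where f vanishes
  obtain ⟨v0, hv0⟩ := DFunLike.ne_iff.mp hf
  have hv0' : f.linear v0 ≠ 0 := by simpa using hv0
  set p0 := Classical.arbitrary P
  set q : P := ((-(f p0) / f.linear v0) • v0) +ᵥ p0 with hq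
  have hfq : f q = 0 := by
    rw [hq, AffineMap.map_vadd, vadd_eq_add, map_smul]
    rw [smul_eq_mul, div_mul_cancel₀ _ hv0', neg_add_cancel]
  have hfx : ∀ x : P, f x = f.linear (x -ᵥ q) := by
    intro x
    conv_lhs => rw [← vsub_vadd x q, AffineMap.map_vadd, vadd_eq_add, hfq, add_zero]
  refine ⟨AffineSubspace.mk' q (LinearMap.ker f.linear), ?_, ?_⟩
  · ext x
    rw [AffineSubspace.mem_coe, AffineSubspace.mem_mk', LinearMap.mem_ker,
      ← hfx]
    simp only [Set.mem_setOf_eq, shear_apply, vadd_eq_self_iff, smul_eq_zero]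
    constructor
    · intro h; exact Or.inl h
    · rintro (h | h); · exact h
      · exact absurd h hw
  · rw [AffineSubspace.direction_mk']
    exact finrank_quot_ker hf

theorem isAffRefl_inv {r : P ≃ᵃ[F] P} (h : IsAffRefl r) : IsAffRefl r⁻¹ := by
  obtain ⟨H, hH, hd⟩ := h
  refine ⟨H, ?_, hd⟩
  rw [hH]
  ext x
  simp only [Set.mem_setOf_eq]
  show r x = x ↔ r.symm x = x
  constructor
  · intro hx
    nth_rewrite 1 [← hx]
    exact r.symm_apply_apply x
  · intro hx
    nth_rewrite 1 [← hx]
    exact r.apply_symm_apply x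

variable [FiniteDimensional F V]

theorem key_fixed : ∀ (k : ℕ) (g : P ≃ᵃ[F] P) (p : P), g p = p → movDim g ≤ k →
    ∃ l : List (P ≃ᵃ[F] P), (∀ r ∈ l, IsAffRefl r) ∧ l.prod = g ∧ l.length ≤ k := by
  intro k
  induction k with
  | zero =>
    intro g p hp hk
    refine ⟨[], by simp, ?_, by simp⟩
    have h0 : finrank F (LinearMap.range (Bmap g)) = 0 := by
      have := movDim_eq (F := F) g ▸ hk
      omega
    have hB : Bmap g = 0 :=
      LinearMap.range_eq_bot.mp (Submodule.finrank_eq_zero.mp h0)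
    have hid : g = 1 := by
      apply AffineEquiv.ext
      intro x
      have hv := vsub_fixed g hp x
      rw [hB, LinearMap.zero_apply, vsub_eq_zero_iff_eq] at hv
      simpa using hv
    rw [List.prod_nil, hid]
  | succ k ih =>
    intro g p hp hk
    by_cases hg : g = 1
    · exact ⟨[], by simp, by simp [hg], by simp⟩
    obtain ⟨q, hq⟩ : ∃ q, g q ≠ q := by
      by_contra hno
      push_neg at hno
      exact hg (AffineEquiv.ext fun x => by simpa using hno x)
    have hgq : g (g q) ≠ g q := fun hc => hq (g.injective hc)
    have hxK : q -ᵥ p ∉ LinearMap.ker (Bmap g) := fun hc => hq ((fixed_iff g hp q).mpr hc)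
    have hyK : g q -ᵥ p ∉ LinearMap.ker (Bmap g) :=
      fun hc => hgq (by rw [(fixed_iff g hp (g q)).mpr hc])
    obtain ⟨φ, hφK, hφx, hφy⟩ := exists_functional hxK hyK
    set w : V := (-(φ (g q -ᵥ p))⁻¹) • ((g q -ᵥ p) - (q -ᵥ p)) with hwdef
    have hyx : (g q -ᵥ p) - (q -ᵥ p) = g q -ᵥ q := vsub_sub_vsub_cancel_right _ _ _
    have hwne : w ≠ 0 := by
      rw [hwdef, hyx]
      exact smul_ne_zero (by simpa using hφy) (by rwa [Ne, vsub_eq_zero_iff_eq])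
    have hφw : φ w ≠ -1 := by
      rw [hwdef, map_smul, map_sub, smul_eq_mul]
      intro hc
      field_simp at hc
      exact hφx (by linear_combination hc)
    have hφne0 : φ ≠ 0 := fun hc => hφx (by rw [hc]; rfl)
    set f := afun φ p with hfdef
    have hfw : f.linear w ≠ -1 := hφw
    set r := shear f w hfw with hrdef
    have hrrefl : IsAffRefl r := isAffRefl_shear f w hfw hwne hφne0
    have hrfix : ∀ z : P, g z = z → r z = z := by
      intro z hz
      have h0 : φ (z -ᵥ p) = 0 := hφK _ ((fixed_iff g hp z).mp hz)
      rw [hrdef, shear_apply]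
      show (f z) • w +ᵥ z = z
      rw [show f z = φ (z -ᵥ p) from rfl, h0, zero_smul, zero_vadd]
    have hrgq : r (g q) = q := by
      rw [hrdef, shear_apply]
      show (f (g q)) • w +ᵥ g q = q
      rw [show f (g q) = φ (g q -ᵥ p) from rfl, hwdef, smul_smul, mul_neg,
        mul_inv_cancel₀ hφy, neg_one_smul, hyx, neg_vsub_eq_vsub_rev, vsub_vadd]
    set h2 := r * g with hh
    have hmul : ∀ z, h2 z = r (g z) := fun z => rfl
    have hhp : h2 p = p := by rw [hmul p, hp, hrfix p hp]
    have hhq : h2 q = q := by rw [hmul q, hrgq]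
    have hker : LinearMap.ker (Bmap g) < LinearMap.ker (Bmap h2) := by
      rw [SetLike.lt_iff_le_and_exists]
      constructor
      · intro v hv
        have hzfix : g (v +ᵥ p) = v +ᵥ p := (fixed_iff g hp _).mpr (by rwa [vadd_vsub])
        have hz2 : h2 (v +ᵥ p) = v +ᵥ p := by rw [hmul, hzfix, hrfix _ hzfix]
        have := (fixed_iff h2 hhp _).mp hz2
        rwa [vadd_vsub] at this
      · exact ⟨q -ᵥ p, (fixed_iff h2 hhp q).mp hhq, hxK⟩
    have hrank : movDim h2 ≤ k := by
      have e1 := LinearMap.finrank_range_add_finrank_ker (Bmap g)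
      have e2 := LinearMap.finrank_range_add_finrank_ker (Bmap h2)
      have e3 := Submodule.finrank_lt_finrank_of_lt hker
      rw [movDim_eq g] at hk
      rw [movDim_eq h2]
      omega
    obtain ⟨l, hl1, hl2, hl3⟩ := ih h2 p hhp hrank
    refine ⟨r⁻¹ :: l, ?_, ?_, by simpa using hl3⟩
    · rintro s hs
      rcases List.mem_cons.mp hs with rfl | hs
      · exact isAffRefl_inv hrrefl
      · exact hl1 s hs
    · rw [List.prod_cons, hl2, hh, inv_mul_cancel_left]

theorem exists_phi (hdim : Nat.card F = 2 → 2 ≤ finrank F V) {b : V} (hb : b ≠ 0) :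
    ∃ φ : V →ₗ[F] F, φ ≠ 0 ∧ φ b ≠ -1 := by
  by_cases hF : Nat.card F = 2
  · -- choose φ vanishing on b
    have h2 := hdim hF
    set K : Submodule F V := F ∙ b with hK
    have hq : finrank F (V ⧸ K) + finrank F K = finrank F V :=
      Submodule.finrank_quotient_add_finrank K
    rw [finrank_span_singleton hb] at hq
    have : Nontrivial (V ⧸ K) := Module.nontrivial_of_finrank_pos (R := F) (by omega)
    obtain ⟨z, hz⟩ := exists_ne (0 : V ⧸ K)
    obtain ⟨ψ, hψ⟩ := exists_dual_eq_one' (F := F) hz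
    refine ⟨ψ.comp K.mkQ, ?_, ?_⟩
    · intro hc
      obtain ⟨z', rfl⟩ := K.mkQ_surjective z
      have := DFunLike.congr_fun hc z'
      rw [LinearMap.comp_apply] at this
      rw [this] at hψ
      exact one_ne_zero hψ.symm
    · have hbK : K.mkQ b = 0 := by
        rw [Submodule.mkQ_apply, Submodule.Quotient.mk_eq_zero]
        exact Submodule.mem_span_singleton_self b
      rw [LinearMap.comp_apply, hbK, map_zero]
      exact fun hc => (neg_ne_zero.mpr one_ne_zero) hc.symm
  · have ht : ∃ t : F, t ≠ 0 ∧ t ≠ -1 := by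
      by_contra hno
      push_neg at hno
      apply hF
      rw [Nat.card_eq_two_iff]
      refine ⟨0, -1, ?_, ?_⟩
      · exact fun hc => (neg_ne_zero.mpr one_ne_zero) hc.symm
      · ext t
        simp only [Set.mem_insert_iff, Set.mem_singleton_iff, Set.mem_univ, iff_true]
        by_cases h0 : t = 0
        · exact Or.inl h0
        · exact Or.inr (hno t h0)
    obtain ⟨t, ht0, ht1⟩ := ht
    obtain ⟨φ0, hφ0⟩ := exists_dual_eq_one' (F := F) hb
    refine ⟨t • φ0, ?_, ?_⟩
    · intro hc
      have := DFunLike.congr_fun hc b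
      rw [LinearMap.smul_apply, hφ0, smul_eq_mul, mul_one] at this
      exact ht0 this
    · rw [LinearMap.smul_apply, hφ0, smul_eq_mul, mul_one]
      exact ht1

theorem translation_two {c : V} (hc : c ≠ 0) {φ : V →ₗ[F] F} (hφ0 : φ ≠ 0) (hφc : φ c ≠ -1) :
    ∃ l : List (P ≃ᵃ[F] P), (∀ r ∈ l, IsAffRefl r) ∧ l.prod = AffineEquiv.constVAdd F P c ∧
      l.length = 2 := by
  set p := Classical.arbitrary P with hp
  set f1 := afun φ p with hf1
  have h1 : f1.linear c ≠ -1 := hφc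
  set s : F := (1 + φ c)⁻¹ with hsdef
  have hs1 : (1 : F) + φ c ≠ 0 := fun hcon => hφc (by linear_combination hcon)
  have hs0 : s ≠ 0 := inv_ne_zero hs1
  have hss : s * (1 + φ c) = 1 := inv_mul_cancel₀ hs1
  set f2 : P →ᵃ[F] F := AffineMap.const F P (1 : F) + (-s) • f1 with hf2
  have hf2lin : f2.linear = (-s) • φ := by
    rw [hf2, AffineMap.add_linear, AffineMap.const_linear, AffineMap.smul_linear, zero_add]
    rfl
  have h2 : f2.linear c ≠ -1 := by
    rw [hf2lin]
    intro hcon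
    simp only [LinearMap.smul_apply, smul_eq_mul] at hcon
    have : s = 0 := by linear_combination hss + hcon
    exact hs0 this
  have hf2ne : f2.linear ≠ 0 := by
    rw [hf2lin]
    exact smul_ne_zero (neg_ne_zero.mpr hs0) hφ0
  set r1 := shear f1 c h1 with hr1
  set r2 := shear f2 c h2 with hr2
  refine ⟨[r2, r1], ?_, ?_, rfl⟩
  · rintro r hr
    rcases List.mem_cons.mp hr with rfl | hr
    · exact isAffRefl_shear f2 c h2 hc hf2ne
    · rcases List.mem_cons.mp hr with rfl | hr
      · exact isAffRefl_shear f1 c h1 hc hφ0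
      · exact absurd hr List.not_mem_nil
  · rw [List.prod_cons, List.prod_cons, List.prod_nil, mul_one]
    apply AffineEquiv.ext
    intro x
    show r2 (r1 x) = c +ᵥ x
    rw [hr1, hr2, shear_apply, shear_apply]
    set u := φ (x -ᵥ p) with hu
    have e1 : f1 x = u := rfl
    have e2 : f2 (f1 x • c +ᵥ x) = 1 - u := by
      rw [hf2]
      simp only [AffineMap.coe_add, AffineMap.coe_smul, AffineMap.coe_const, Pi.add_apply,
        Pi.smul_apply, Function.const_apply, smul_eq_mul]
      have e3 : f1 (f1 x • c +ᵥ x) = u * φ c + u := by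
        rw [e1]
        show φ ((u • c +ᵥ x) -ᵥ p) = u * φ c + u
        rw [vadd_vsub_assoc, map_add, map_smul, smul_eq_mul, ← hu]
      rw [e3]
      linear_combination (-u) * hss
    rw [e2, e1, vadd_vadd, ← add_smul, sub_add_cancel, one_smul]

theorem reflLen_le_length {g : P ≃ᵃ[F] P} {l : List (P ≃ᵃ[F] P)}
    (h1 : ∀ r ∈ l, IsAffRefl r) (h2 : l.prod = g) : reflLenA g ≤ (l.length : ℕ∞) :=
  sInf_le ⟨l, h1, h2, rfl⟩

end Aux

theorem stmt16 {F V P : Type*} [Field F] [AddCommGroup V] [Module F V]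
    [FiniteDimensional F V] [AddTorsor V P]
    (hdim : Nat.card F = 2 → 2 ≤ Module.finrank F V)
    (g : P ≃ᵃ[F] P) :
    reflLenA g ≤ (movDim g : ℕ∞) + 2 := by
  set o := Classical.arbitrary P with ho
  set b := g o -ᵥ o with hbdef
  set g0 := (AffineEquiv.constVAdd F P b)⁻¹ * g with hg0def
  have hg0app : ∀ x, g0 x = (AffineEquiv.constVAdd F P b)⁻¹ (g x) := fun x => rfl
  have hinv : ∀ y : P, (AffineEquiv.constVAdd F P b)⁻¹ y = -b +ᵥ y := by
    intro y
    show (AffineEquiv.constVAdd F P b).symm y = -b +ᵥ y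
    apply (AffineEquiv.constVAdd F P b).injective
    rw [AffineEquiv.apply_symm_apply, AffineEquiv.constVAdd_apply, vadd_vadd]
    simp
  have hg0o : g0 o = o := by
    rw [hg0app, hinv, hbdef, neg_vsub_eq_vsub_rev, vsub_vadd]
  have hlin : ∀ v, g0.linear v = g.linear v := by
    intro v
    rw [show g0.linear v = g0.linear ((v +ᵥ o) -ᵥ o) by rw [vadd_vsub], ← vsub_apply_eq,
      hg0app, hg0app, hinv, hinv, vadd_vsub_vadd_cancel_left, vsub_apply_eq, vadd_vsub]
  have hBeq : Bmap g0 = Bmap g := by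
    ext v
    rw [Bmap_apply, Bmap_apply, hlin v]
  have hmovEq : movDim g0 = movDim g := by
    rw [movDim_eq, movDim_eq, hBeq]
  obtain ⟨l0, hl01, hl02, hl03⟩ := key_fixed (movDim g) g0 o hg0o (le_of_eq hmovEq)
  by_cases hbz : b = 0
  · have hgg : g0 = g := by
      rw [hg0def, hbz, AffineEquiv.constVAdd_zero]
      show (1 : P ≃ᵃ[F] P)⁻¹ * g = g
      rw [inv_one, one_mul]
    refine le_trans (reflLen_le_length hl01 (by rw [hl02, hgg])) ?_
    exact le_trans (Nat.cast_le.mpr hl03) le_self_add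
  · obtain ⟨φ, hφ0, hφc⟩ := exists_phi hdim hbz
    obtain ⟨lt, ht1, ht2, ht3⟩ := translation_two (P := P) hbz hφ0 hφc
    have hprod : (lt ++ l0).prod = g := by
      rw [List.prod_append, ht2, hl02, hg0def, mul_inv_cancel_left]
    have hmem : ∀ r ∈ lt ++ l0, IsAffRefl r := by
      intro r hr
      rcases List.mem_append.mp hr with h | h
      · exact ht1 r h
      · exact hl01 r h
    have hlen : (lt ++ l0).length ≤ movDim g + 2 := by
      rw [List.length_append, ht3]
      omega
    refine le_trans (reflLen_le_length hmem hprod) ?_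
    exact_mod_cast hlen
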